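/- Every 1-generic real X satisfies that the complement of X is not enumeration reducible to X. -/

import Mathlib

open Classical in
/-- The characteristic (total) function of a set of naturals, as a partial function. -/
noncomputable def chi (X : Set ℕ) : ℕ →. ℕ :=
  fun n => Part.some (if n ∈ X then 1 else 0)

/-- Partial functions computable relative to an oracle `O`. -/
inductive RecursiveIn' (O : ℕ →. ℕ) : (ℕ →. ℕ) → Prop
  | zero : RecursiveIn' O fun _ => 0
  | succ : RecursiveIn' O Nat.succ
  | left : RecursiveIn' O fun n => (Nat.unpair n).1
  | right : RecursiveIn' O fun n => (Nat.unpair n).2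
  | oracle : RecursiveIn' O O
  | pair {f g : ℕ →. ℕ} : RecursiveIn' O f → RecursiveIn' O g →
      RecursiveIn' O fun n => Nat.pair <$> f n <*> g n
  | comp {f g : ℕ →. ℕ} : RecursiveIn' O f → RecursiveIn' O g →
      RecursiveIn' O fun n => g n >>= f
  | prec {f g : ℕ →. ℕ} : RecursiveIn' O f → RecursiveIn' O g →
      RecursiveIn' O (Nat.unpaired fun a n =>
        n.rec (f a) fun y IH => do let i ← IH; g (Nat.pair a (Nat.pair y i)))
  | rfind {f : ℕ →. ℕ} : RecursiveIn' O f →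
      RecursiveIn' O fun a => Nat.rfind fun n => (fun m => m = 0) <$> f (Nat.pair a n)

/-- `X ≤_T Y` : `X` is computable with oracle `Y`. -/
def TuringLE (X Y : Set ℕ) : Prop := RecursiveIn' (chi Y) (chi X)

/-- `X` is c.e.(`Y`) : `X` is the domain of a partial function computable with oracle `Y`. -/
def CEIn (Y X : Set ℕ) : Prop := ∃ f : ℕ →. ℕ, RecursiveIn' (chi Y) f ∧ X = f.Dom

/-- `X` is relatively c.e. -/
def RelativelyCE (X : Set ℕ) : Prop := ∃ Y : Set ℕ, CEIn Y X ∧ ¬ TuringLE X Y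

/-- A computably enumerable predicate (unrelativized). -/
def CEPred {α : Type} [Primcodable α] (p : α → Prop) : Prop :=
  ∃ f : α →. Unit, Partrec f ∧ ∀ a, p a ↔ (f a).Dom

/-- `A ≤_e B` : enumeration reducibility. -/
def EnumLE (A B : Set ℕ) : Prop :=
  ∃ C : Set (ℕ × Finset ℕ), CEPred (· ∈ C) ∧
    ∀ n, n ∈ A ↔ ∃ E : Finset ℕ, ↑E ⊆ B ∧ (n, E) ∈ C

open Classical in
/-- `X ↾ k` : the binary string of the first `k` values of the characteristic function. -/
noncomputable def seg (X : Set ℕ) (k : ℕ) : List Bool :=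
  (List.range k).map fun n => decide (n ∈ X)

/-- `X` is 1-generic. -/
def OneGeneric (X : Set ℕ) : Prop :=
  ∀ S : Set (List Bool), CEPred (· ∈ S) →
    (∃ k, seg X k ∈ S) ∨ (∃ k, ∀ σ : List Bool, seg X k <+: σ → σ ∉ S)

/-- `X` is an infinite path through the tree `T`. -/
def IsPath (T : Set (List Bool)) (X : Set ℕ) : Prop := ∀ k, seg X k ∈ T

/-- `T` is a computable tree of finite binary strings. -/
def ComputableTree (T : Set (List Bool)) : Prop :=
  (∀ σ τ : List Bool, σ ∈ T → τ <+: σ → τ ∈ T) ∧ ComputablePred (· ∈ T)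

/-!
Suppose `Xᶜ` is enumerated from `X` by a c.e. set `C` of axioms `(n, E)`, and consider the c.e.
set of strings `σ` from which some axiom of `C` enumerates a position where `σ` itself is `1`.
No initial segment of `X` lies in it, since that would put some `n` in `X` and in `Xᶜ` at once.
So by genericity some `X ↾ k` has no extension in it. But whenever `n ≥ k` is outside `X`, an axiom
`(n, E)` with `E ⊆ X` exists, and a long enough initial segment of `X ∪ {n}` is such an extension.
Hence `X` is cofinite, which no 1-generic real is.
-/

namespace CEPred

variable {α β : Type} [Primcodable α] [Primcodable β]

theorem iff_rePred {p : α → Prop} : CEPred p ↔ REPred p :=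
  ⟨fun ⟨_, hf, hfp⟩ => hf.dom_re.of_eq fun a => (hfp a).symm,
    fun hp => ⟨_, hp, fun _ => by simp [Part.assert]⟩⟩

theorem of_primrecPred {p : α → Prop} (hp : PrimrecPred p) : CEPred p :=
  iff_rePred.2 hp.computablePred.to_re

theorem comp {p : β → Prop} (hp : CEPred p) {g : α → β} (hg : Computable g) :
    CEPred fun a => p (g a) :=
  let ⟨f, hf, hfp⟩ := hp
  ⟨fun a => f (g a), hf.comp hg, fun a => hfp (g a)⟩

theorem and {p q : α → Prop} (hp : CEPred p) (hq : CEPred q) : CEPred fun a => p a ∧ q a := by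
  obtain ⟨f, hf, hfp⟩ := hp
  obtain ⟨g, hg, hgq⟩ := hq
  exact ⟨fun a => (f a).bind fun _ => g a, hf.bind (hg.comp Computable.fst).to₂,
    fun a => by simp [hfp, hgq]⟩

open Encodable Nat.Partrec Code in
theorem exists_snd {p : α → β → Prop} (hp : CEPred fun x : α × β => p x.1 x.2) :
    CEPred fun a => ∃ b, p a b := by
  obtain ⟨f, hf, hfp⟩ := hp
  obtain ⟨c, hc⟩ := Code.exists_code.1 hf
  have hdom : ∀ a n, (eval c (Nat.pair (encode a) n)).Dom ↔ ∃ b ∈ decode n, p a b := by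
    intro a n
    cases h : decode (α := β) n
    · simp [hc, decode_prod_val, h]
    · simpa [hc, decode_prod_val, h] using (hfp _).symm
  -- dovetailing: `m` codes a candidate code `m.unpair.1` for `b` and a step bound `m.unpair.2`
  have hsearch : Computable₂ fun (a : α) (m : ℕ) =>
      evaln m.unpair.2 c (Nat.pair (encode a) m.unpair.1) :=
    (primrec_evaln.comp (((Primrec.snd.comp (Primrec.unpair.comp Primrec.snd)).pair
      (Primrec.const c)).pair (Primrec₂.natPair.comp (Primrec.encode.comp Primrec.fst)
        (Primrec.fst.comp (Primrec.unpair.comp Primrec.snd))))).to_comp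
  refine ⟨fun a => (Nat.rfindOpt fun m =>
      evaln m.unpair.2 c (Nat.pair (encode a) m.unpair.1)).map fun _ => (),
    (Partrec.rfindOpt hsearch).map (Computable.const ()).to₂, fun a => ?_⟩
  simp only [Part.map_Dom, Nat.rfindOpt_dom]
  constructor
  · rintro ⟨b, hb⟩
    obtain ⟨x, hx⟩ := Part.dom_iff_mem.1 ((hdom a (encode b)).2 ⟨b, encodek b, hb⟩)
    obtain ⟨k, hk⟩ := evaln_complete.1 hx
    exact ⟨Nat.pair (encode b) k, x, by simpa using hk⟩
  · rintro ⟨m, x, hx⟩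
    obtain ⟨b, -, hb⟩ := (hdom a m.unpair.1).1 (Part.dom_iff_mem.2 ⟨x, evaln_sound hx⟩)
    exact ⟨b, hb⟩

end CEPred

open Denumerable in
theorem Denumerable.primrec_raise' : Primrec₂ raise' := by
  have hfold : ∀ (l : List ℕ) n out,
      (l.foldl (fun p m => (m + p.1 + 1, (m + p.1) :: p.2)) (n, out)).2 =
      (raise' l n).reverse ++ out := by
    intro l
    induction l with
    | nil => simp [Denumerable.raise']
    | cons m l ih => intro n out; simp [Denumerable.raise', ih]
  have hstep : Primrec₂ fun (_ : List ℕ × ℕ) (q : (ℕ × List ℕ) × ℕ) =>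
      (q.2 + q.1.1 + 1, (q.2 + q.1.1) :: q.1.2) :=
    have hsum : Primrec₂ fun (_ : List ℕ × ℕ) (q : (ℕ × List ℕ) × ℕ) => q.2 + q.1.1 :=
      Primrec.nat_add.comp (Primrec.snd.comp Primrec.snd)
        (Primrec.fst.comp (Primrec.fst.comp Primrec.snd))
    (Primrec.succ.comp hsum).pair
      (Primrec.list_cons.comp hsum (Primrec.snd.comp (Primrec.fst.comp Primrec.snd)))
  exact (Primrec.list_reverse.comp (Primrec.snd.comp (Primrec.list_foldl Primrec.fst
    (Primrec.snd.pair (Primrec.const [])) hstep))).of_eq fun ⟨l, n⟩ => by simp [hfold]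

open Denumerable Encodable in
/-- `Finset ℕ` is encoded by the gaps of its sorted list of elements, which `raise'` undoes. -/
theorem Primrec.finset_sort : Primrec fun s : Finset ℕ => s.sort (· ≤ ·) := by
  refine (primrec_raise'.comp ((Primrec.ofNat (List ℕ)).comp Primrec.encode)
    (Primrec.const 0)).of_eq fun s => ?_
  have hmap : s.map (eqv ℕ).toEmbedding = s := Finset.map_refl
  have hs : @encode _ Primcodable.toEncodable s =
      encode (lower' ((s.map (eqv ℕ).toEmbedding).sort (· ≤ ·)) 0) := rfl
  rw [hs, ofNat_encode, hmap]
  exact raise_lower' (fun _ _ => Nat.zero_le _) (Finset.sortedLT_sort s)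

def enumOp (C : Set (ℕ × Finset ℕ)) (A : Set ℕ) : Set ℕ :=
  {n | ∃ E : Finset ℕ, ↑E ⊆ A ∧ (n, E) ∈ C}

/-- A string `σ` is read as the finite set of positions where it is `true`. -/
def selfEnumerating (C : Set (ℕ × Finset ℕ)) : Set (List Bool) :=
  {σ | ∃ b ∈ C, σ.getD b.1 false = true ∧ ∀ e ∈ b.2, σ.getD e false = true}

open Primrec in
theorem cePred_selfEnumerating {C : Set (ℕ × Finset ℕ)} (hC : CEPred (· ∈ C)) :
    CEPred (· ∈ selfEnumerating C) := by
  have hbit : PrimrecRel fun (i : ℕ) (σ : List Bool) => σ.getD i false = true :=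
    Primrec.eq.comp ((list_getD false).comp snd fst) (const true)
  have hcheck : PrimrecPred fun x : List Bool × (ℕ × Finset ℕ) =>
      x.1.getD x.2.1 false = true ∧ ∀ e ∈ x.2.2, x.1.getD e false = true :=
    (hbit.comp (fst.comp snd) fst).and
      ((hbit.forall_mem_list.comp (finset_sort.comp (snd.comp snd)) fst).of_eq fun _ => by simp)
  exact CEPred.exists_snd ((hC.comp Computable.snd).and (CEPred.of_primrecPred hcheck))

theorem getD_seg (X : Set ℕ) (k i : ℕ) : (seg X k).getD i false = true ↔ i < k ∧ i ∈ X := by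
  by_cases hi : i < k <;> simp [seg, hi, List.getD_eq_getElem?_getD]

theorem seg_prefix_seg {X Y : Set ℕ} {k m : ℕ} (hkm : k ≤ m) (hXY : ∀ i < k, i ∈ X ↔ i ∈ Y) :
    seg X k <+: seg Y m := by
  rw [List.prefix_iff_eq_take]
  simpa [seg, ← List.map_take, List.take_range, hkm] using hXY

section SelfEnumerating

variable {C : Set (ℕ × Finset ℕ)} {X : Set ℕ} {k : ℕ}

theorem nonempty_inter_enumOp_of_seg_mem (h : seg X k ∈ selfEnumerating C) :
    (X ∩ enumOp C X).Nonempty := by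
  obtain ⟨⟨n, E⟩, hnE, hn, hE⟩ := h
  exact ⟨n, ((getD_seg X k n).1 hn).2, E, fun e he => ((getD_seg X k e).1 (hE e he)).2, hnE⟩

theorem seg_mem_selfEnumerating {n m : ℕ} {E : Finset ℕ} (hnE : (n, E) ∈ C) (hn : n ∈ X)
    (hE : ↑E ⊆ X) (hm : insert n E ⊆ Finset.range m) : seg X m ∈ selfEnumerating C :=
  ⟨(n, E), hnE, (getD_seg X m n).2 ⟨Finset.mem_range.1 (hm (Finset.mem_insert_self n E)), hn⟩,
    fun e he => (getD_seg X m e).2 ⟨Finset.mem_range.1 (hm (Finset.mem_insert_of_mem he)), hE he⟩⟩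

theorem enumOp_inter_Ici_subset_of_forall_not_mem
    (hk : ∀ σ, seg X k <+: σ → σ ∉ selfEnumerating C) : enumOp C X ∩ Set.Ici k ⊆ X := by
  rintro n ⟨⟨E, hEX, hnE⟩, hkn : k ≤ n⟩
  by_contra hnX
  obtain ⟨m, hm⟩ := (insert n E).exists_nat_subset_range
  have hnm : n < m := Finset.mem_range.1 (hm (Finset.mem_insert_self n E))
  have hagree : ∀ i < k, i ∈ X ↔ i ∈ insert n X := fun i hi => by
    simp [show i ≠ n by omega]
  exact hk _ (seg_prefix_seg (by omega) hagree) (seg_mem_selfEnumerating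
    hnE (Set.mem_insert n X) (hEX.trans (Set.subset_insert n X)) hm)

end SelfEnumerating

theorem OneGeneric.exists_seg_mem_of_dense {X : Set ℕ} (hX : OneGeneric X) {S : Set (List Bool)}
    (hS : CEPred (· ∈ S)) (hdense : ∀ τ, ∃ σ ∈ S, τ <+: σ) : ∃ k, seg X k ∈ S := by
  refine (hX S hS).resolve_right ?_
  rintro ⟨k, hk⟩
  obtain ⟨σ, hσS, hσ⟩ := hdense (seg X k)
  exact hk σ hσ hσS

open Primrec in
theorem OneGeneric.infinite_compl {X : Set ℕ} (hX : OneGeneric X) : Xᶜ.Infinite := by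
  refine Set.infinite_of_forall_exists_gt fun k => ?_
  let S : Set (List Bool) := {σ | ∃ i < σ.length, k < i ∧ σ.getD i false = false}
  have hS : CEPred (· ∈ S) := by
    have hR : PrimrecRel fun (i : ℕ) (σ : List Bool) => k < i ∧ σ.getD i false = false :=
      (nat_lt.comp (const k) fst).and
        (Primrec.eq.comp ((list_getD false).comp snd fst) (const false))
    exact CEPred.of_primrecPred
      ((hR.exists_mem_list.comp (list_range.comp list_length) Primrec.id).of_eq fun _ => by simp [S])
  have hdense : ∀ τ, ∃ σ ∈ S, τ <+: σ := fun τ =>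
    ⟨τ ++ List.replicate (k + 2) false, ⟨τ.length + k + 1, by simp; omega, by omega, by
      rw [List.getD_append_right _ _ _ _ (by omega)]; exact List.getD_replicate _ (by omega)⟩,
      List.prefix_append _ _⟩
  obtain ⟨m, i, him, hki, hi⟩ := hX.exists_seg_mem_of_dense hS hdense
  refine ⟨i, fun hiX => ?_, hki⟩
  rw [seg, List.length_map, List.length_range] at him
  exact Bool.false_ne_true (hi ▸ (getD_seg X m i).2 ⟨him, hiX⟩)

/-- The complement of a 1-generic real is not enumeration reducible to it. -/
theorem oneGeneric_not_enumLE (X : Set ℕ) (hX : OneGeneric X) :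
    ¬ EnumLE Xᶜ X := by
  rintro ⟨C, hC, hXC⟩
  rcases hX _ (cePred_selfEnumerating hC) with ⟨k, hk⟩ | ⟨k, hk⟩
  · obtain ⟨n, hnX, hn⟩ := nonempty_inter_enumOp_of_seg_mem hk
    exact (hXC n).2 hn hnX
  · refine hX.infinite_compl ((Set.finite_Iio k).subset fun n hn => ?_)
    by_contra hkn
    exact hn (enumOp_inter_Ici_subset_of_forall_not_mem hk ⟨(hXC n).1 hn, Set.notMem_Iio.1 hkn⟩)
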